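/- Fix d, n ≥ 1, matrices K, Q, V ∈ ℝ^{d×d} with ‖V‖₂ ≤ C_V (spectral norm), and maps y_1,…,y_n : {−1,1}^n → ℝ^d with ‖y_i(x)‖₂ ≤ √d for all i and x. Let C_A = d·‖KᵀQ‖₂, logits a_{j,u}(x) = (K·y_u(x))ᵀ·Q·y_j(x), softmax weights â_{j,u}(x) = exp(a_{j,u}(x)) / Σ_{s=1}^n exp(a_{j,s}(x)), and Head_j(x) = Σ_{u=1}^n â_{j,u}(x)·V·y_u(x). Then for every x ∈ {−1,1}^n and all j, q ∈ {1,…,n}: ‖Head_j(x) − Head_j(x^{⊕q})‖₂ ≤ 4·C_V·√d·exp(4·C_A)·( ‖y_j(x) − y_j(x^{⊕q})‖₂ + (1/n)·Σ_{w=1}^n ‖y_w(x) − y_w(x^{⊕q})‖₂ ). -/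

import Mathlib

open scoped BigOperators
open Matrix

noncomputable section

namespace SensTF

/-- Flip the `q`-th bit of `x`. -/
def flip {n : ℕ} (x : Fin n → Bool) (q : Fin n) : Fin n → Bool :=
  Function.update x q (!(x q))

/-- Euclidean norm of a vector in `ℝ^d`. -/
def enorm {d : ℕ} (v : Fin d → ℝ) : ℝ := Real.sqrt (∑ j : Fin d, (v j) ^ 2)

/-- Spectral norm (ℓ²-operator norm) of a `d × d` matrix. -/
def specNorm {d : ℕ} (M : Matrix (Fin d) (Fin d) ℝ) : ℝ :=
  ‖Matrix.toEuclideanCLM (𝕜 := ℝ) M‖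

/-- Attention logit `a_{i,u} = (K y_u)ᵀ Q y_i`. -/
def attLogit {d n : ℕ} (K Q : Matrix (Fin d) (Fin d) ℝ)
    (yp : Fin n → Fin d → ℝ) (i u : Fin n) : ℝ :=
  dotProduct (K.mulVec (yp u)) (Q.mulVec (yp i))

/-- Attention weight (softmax of the logits). -/
def attWeight {d n : ℕ} (K Q : Matrix (Fin d) (Fin d) ℝ)
    (yp : Fin n → Fin d → ℝ) (i u : Fin n) : ℝ :=
  Real.exp (attLogit K Q yp i u) / ∑ s : Fin n, Real.exp (attLogit K Q yp i s)

end SensTF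

open SensTF

/-!
If every token has norm at most `r`, Cauchy–Schwarz bounds every logit by `A = r² ‖KᵀQ‖`, so each
softmax weight is at most `e^{2A}/n`, and a logit moves by at most `r ‖KᵀQ‖ (Δ_j + Δ_u)` when the
tokens move by `Δ`. Normalising a positive vector is Lipschitz in `ℓ¹`, which makes the weights
move by at most `(2 e^{2A}/n) ∑_u |Δ logit_u|` in total. Splitting the head difference into
"old weights times moved values" plus "moved weights times new values" then gives the bound
`‖V‖ e^{2A} (1 + 2A) (Δ_j + (1/n) ∑_w Δ_w)`, and `1 + 2A ≤ e^{2A}`.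
-/

namespace SensTF

section EuclideanNorm

variable {d : ℕ}

lemma enorm_eq_norm_toLp (v : Fin d → ℝ) : enorm v = ‖WithLp.toLp 2 v‖ := by
  simp [enorm, EuclideanSpace.norm_eq, sq_abs]

lemma enorm_nonneg (v : Fin d → ℝ) : 0 ≤ enorm v := Real.sqrt_nonneg _

lemma enorm_add_le (u v : Fin d → ℝ) : enorm (u + v) ≤ enorm u + enorm v := by
  simpa only [enorm_eq_norm_toLp, WithLp.toLp_add] using norm_add_le _ _

lemma enorm_smul (c : ℝ) (v : Fin d → ℝ) : enorm (c • v) = |c| * enorm v := by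
  simp only [enorm_eq_norm_toLp, WithLp.toLp_smul, norm_smul, Real.norm_eq_abs]

lemma enorm_sum_le {ι : Type*} (s : Finset ι) (f : ι → Fin d → ℝ) :
    enorm (∑ i ∈ s, f i) ≤ ∑ i ∈ s, enorm (f i) := by
  simpa only [enorm_eq_norm_toLp, WithLp.toLp_sum] using norm_sum_le _ _

lemma specNorm_nonneg (M : Matrix (Fin d) (Fin d) ℝ) : 0 ≤ specNorm M := norm_nonneg _

lemma enorm_mulVec_le (M : Matrix (Fin d) (Fin d) ℝ) (v : Fin d → ℝ) :
    enorm (M *ᵥ v) ≤ specNorm M * enorm v := by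
  simpa only [enorm_eq_norm_toLp, specNorm, Matrix.toEuclideanCLM_toLp]
    using (Matrix.toEuclideanCLM (𝕜 := ℝ) M).le_opNorm (WithLp.toLp 2 v)

lemma abs_dotProduct_le (u v : Fin d → ℝ) : |u ⬝ᵥ v| ≤ enorm u * enorm v := by
  simpa only [enorm_eq_norm_toLp, EuclideanSpace.inner_toLp_toLp, star_trivial,
    dotProduct_comm v] using abs_real_inner_le_norm (WithLp.toLp 2 u) (WithLp.toLp 2 v)

lemma abs_dotProduct_mulVec_le (M : Matrix (Fin d) (Fin d) ℝ) (u v : Fin d → ℝ) :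
    |u ⬝ᵥ M *ᵥ v| ≤ specNorm M * (enorm u * enorm v) :=
  calc |u ⬝ᵥ M *ᵥ v| ≤ enorm u * (specNorm M * enorm v) :=
        (abs_dotProduct_le _ _).trans
          (mul_le_mul_of_nonneg_left (enorm_mulVec_le M v) (enorm_nonneg u))
    _ = specNorm M * (enorm u * enorm v) := by ring

lemma abs_dotProduct_mulVec_sub_le (M : Matrix (Fin d) (Fin d) ℝ) (u u' v v' : Fin d → ℝ) :
    |u ⬝ᵥ M *ᵥ v - u' ⬝ᵥ M *ᵥ v'| ≤
      specNorm M * (enorm u * enorm (v - v') + enorm (u - u') * enorm v') := by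
  have hsplit : u ⬝ᵥ M *ᵥ v - u' ⬝ᵥ M *ᵥ v' = u ⬝ᵥ M *ᵥ (v - v') + (u - u') ⬝ᵥ M *ᵥ v' := by
    simp only [Matrix.mulVec_sub, dotProduct_sub, sub_dotProduct]; ring
  rw [hsplit, mul_add]
  exact (abs_add_le _ _).trans
    (add_le_add (abs_dotProduct_mulVec_le _ _ _) (abs_dotProduct_mulVec_le _ _ _))

end EuclideanNorm

lemma abs_exp_sub_exp_le {A x y : ℝ} (hx : x ≤ A) (hy : y ≤ A) :
    |Real.exp x - Real.exp y| ≤ Real.exp A * |x - y| := by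
  wlog hyx : y ≤ x generalizing x y
  · rw [abs_sub_comm, abs_sub_comm x]; exact this hy hx (le_of_not_ge hyx)
  rw [abs_of_nonneg (sub_nonneg.2 (Real.exp_le_exp.2 hyx)), abs_of_nonneg (sub_nonneg.2 hyx)]
  have hexp : Real.exp y = Real.exp x * Real.exp (y - x) := by rw [← Real.exp_add]; ring_nf
  calc Real.exp x - Real.exp y = Real.exp x * (1 - Real.exp (y - x)) := by rw [hexp]; ring
    _ ≤ Real.exp x * (x - y) :=
        mul_le_mul_of_nonneg_left (by linarith [Real.add_one_le_exp (y - x)]) (Real.exp_pos x).le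
    _ ≤ Real.exp A * (x - y) :=
        mul_le_mul_of_nonneg_right (Real.exp_le_exp.2 hx) (sub_nonneg.2 hyx)

section Softmax

variable {ι : Type*} [Fintype ι]

def softmax (a : ι → ℝ) (u : ι) : ℝ := Real.exp (a u) / ∑ s, Real.exp (a s)

lemma card_mul_exp_neg_le_sum_exp {a : ι → ℝ} {A : ℝ} (ha : ∀ u, |a u| ≤ A) :
    Fintype.card ι * Real.exp (-A) ≤ ∑ s, Real.exp (a s) := by
  simpa using Finset.card_nsmul_le_sum Finset.univ (fun s ↦ Real.exp (a s)) (Real.exp (-A))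
    fun s _ ↦ Real.exp_le_exp.2 (neg_le_of_abs_le (ha s))

lemma softmax_le {a : ι → ℝ} {A : ℝ} (ha : ∀ u, |a u| ≤ A) (u : ι) :
    softmax a u ≤ Real.exp (2 * A) / Fintype.card ι := by
  have hcard : (0 : ℝ) < Fintype.card ι := Nat.cast_pos.2 (Fintype.card_pos_iff.2 ⟨u⟩)
  have hS := card_mul_exp_neg_le_sum_exp ha
  have hS_pos : 0 < ∑ s, Real.exp (a s) := (by positivity : (0 : ℝ) < _).trans_le hS
  rw [softmax, div_le_div_iff₀ hS_pos hcard]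
  calc Real.exp (a u) * Fintype.card ι ≤ Real.exp A * Fintype.card ι := by
        gcongr; exact le_of_abs_le (ha u)
    _ = Real.exp (2 * A) * (Fintype.card ι * Real.exp (-A)) := by
        rw [mul_left_comm, ← Real.exp_add]; ring_nf
    _ ≤ Real.exp (2 * A) * ∑ s, Real.exp (a s) := by gcongr

lemma sum_abs_div_sum_sub_div_sum_le (f g : ι → ℝ) (hf : 0 < ∑ s, f s) (hg : ∀ u, 0 ≤ g u)
    (hg' : 0 < ∑ s, g s) :
    ∑ u, |f u / ∑ s, f s - g u / ∑ s, g s| ≤ 2 * (∑ u, |f u - g u|) / ∑ s, f s := by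
  set S := ∑ s, f s
  set S' := ∑ s, g s
  have hsplit : ∀ u, f u / S - g u / S' = (f u - g u) / S + g u / S' * ((S' - S) / S) := by
    intro u; field_simp; ring
  have hmass : |S' - S| ≤ ∑ u, |f u - g u| := by
    rw [abs_sub_comm, ← Finset.sum_sub_distrib]; exact Finset.abs_sum_le_sum_abs _ _
  calc ∑ u, |f u / S - g u / S'|
      ≤ ∑ u, (|f u - g u| / S + g u / S' * (|S' - S| / S)) := by
        refine Finset.sum_le_sum fun u _ ↦ ?_
        rw [hsplit]
        refine (abs_add_le _ _).trans_eq ?_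
        rw [abs_mul, abs_of_nonneg (div_nonneg (hg u) hg'.le), abs_div, abs_div, abs_of_pos hf]
    _ = (∑ u, |f u - g u|) / S + |S' - S| / S := by
        rw [Finset.sum_add_distrib, ← Finset.sum_div, ← Finset.sum_mul, ← Finset.sum_div,
          div_self hg'.ne', one_mul]
    _ ≤ 2 * (∑ u, |f u - g u|) / S := by
        rw [two_mul, add_div]; gcongr

lemma sum_abs_softmax_sub_le {a b : ι → ℝ} {A : ℝ} (ha : ∀ u, |a u| ≤ A)
    (hb : ∀ u, |b u| ≤ A) :
    ∑ u, |softmax a u - softmax b u| ≤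
      2 * Real.exp (2 * A) / Fintype.card ι * ∑ u, |a u - b u| := by
  rcases isEmpty_or_nonempty ι with hι | ⟨⟨u₀⟩⟩
  · simp
  have hcard : (0 : ℝ) < Fintype.card ι := Nat.cast_pos.2 (Fintype.card_pos_iff.2 ⟨u₀⟩)
  have hS := card_mul_exp_neg_le_sum_exp ha
  have hS_pos : 0 < ∑ s, Real.exp (a s) := (by positivity : (0 : ℝ) < _).trans_le hS
  have hexp : ∑ u, |Real.exp (a u) - Real.exp (b u)| ≤ Real.exp A * ∑ u, |a u - b u| := by
    rw [Finset.mul_sum]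
    gcongr with u
    exact abs_exp_sub_exp_le (le_of_abs_le (ha u)) (le_of_abs_le (hb u))
  calc ∑ u, |softmax a u - softmax b u|
      ≤ 2 * (∑ u, |Real.exp (a u) - Real.exp (b u)|) / ∑ s, Real.exp (a s) :=
        sum_abs_div_sum_sub_div_sum_le _ _ hS_pos (fun u ↦ (Real.exp_pos _).le)
          (Finset.sum_pos (fun u _ ↦ Real.exp_pos _) ⟨u₀, Finset.mem_univ _⟩)
    _ ≤ 2 * (Real.exp A * ∑ u, |a u - b u|) / (Fintype.card ι * Real.exp (-A)) := by
        gcongr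
    _ = 2 * Real.exp (2 * A) / Fintype.card ι * ∑ u, |a u - b u| := by
        have : Real.exp A = Real.exp (2 * A) * Real.exp (-A) := by
          rw [← Real.exp_add]; ring_nf
        rw [this]; field_simp

end Softmax

section Attention

variable {d n : ℕ}

lemma enorm_sum_smul_mulVec_sub_le {ι : Type*} [Fintype ι] (V : Matrix (Fin d) (Fin d) ℝ)
    {p p' : ι → ℝ} {z z' : ι → Fin d → ℝ} {P r : ℝ} (hp : ∀ u, 0 ≤ p u) (hP : ∀ u, p u ≤ P)
    (hz' : ∀ u, enorm (z' u) ≤ r) :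
    enorm (∑ u, p u • V *ᵥ z u - ∑ u, p' u • V *ᵥ z' u) ≤
      specNorm V * (P * ∑ u, enorm (z u - z' u) + r * ∑ u, |p u - p' u|) := by
  have hsplit : ∑ u, p u • V *ᵥ z u - ∑ u, p' u • V *ᵥ z' u =
      ∑ u, (p u • V *ᵥ (z u - z' u) + (p u - p' u) • V *ᵥ z' u) := by
    rw [← Finset.sum_sub_distrib]
    refine Finset.sum_congr rfl fun u _ ↦ ?_
    rw [Matrix.mulVec_sub, smul_sub, sub_smul]; abel
  have hV := specNorm_nonneg V
  rw [hsplit, Finset.mul_sum, Finset.mul_sum, ← Finset.sum_add_distrib, Finset.mul_sum]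
  refine (enorm_sum_le _ _).trans (Finset.sum_le_sum fun u _ ↦ (enorm_add_le _ _).trans ?_)
  rw [enorm_smul, enorm_smul, abs_of_nonneg (hp u), mul_add]
  refine add_le_add ?_ ?_
  · calc p u * enorm (V *ᵥ (z u - z' u)) ≤ P * (specNorm V * enorm (z u - z' u)) :=
          mul_le_mul (hP u) (enorm_mulVec_le _ _) (enorm_nonneg _) ((hp u).trans (hP u))
      _ = specNorm V * (P * enorm (z u - z' u)) := by ring
  · calc |p u - p' u| * enorm (V *ᵥ z' u) ≤ |p u - p' u| * (specNorm V * r) :=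
          mul_le_mul_of_nonneg_left
            ((enorm_mulVec_le _ _).trans (mul_le_mul_of_nonneg_left (hz' u) hV)) (abs_nonneg _)
      _ = specNorm V * (r * |p u - p' u|) := by ring

lemma attLogit_eq_dotProduct_mulVec (K Q : Matrix (Fin d) (Fin d) ℝ) (yp : Fin n → Fin d → ℝ)
    (i u : Fin n) : attLogit K Q yp i u = yp u ⬝ᵥ (Kᵀ * Q) *ᵥ yp i := by
  rw [attLogit, ← Matrix.mulVec_mulVec, Matrix.dotProduct_mulVec (yp u), Matrix.vecMul_transpose]

lemma attWeight_eq_softmax (K Q : Matrix (Fin d) (Fin d) ℝ) (yp : Fin n → Fin d → ℝ) (i : Fin n) :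
    attWeight K Q yp i = softmax (attLogit K Q yp i) := rfl

variable (K Q : Matrix (Fin d) (Fin d) ℝ) {yp yp' : Fin n → Fin d → ℝ} {r : ℝ}

lemma abs_attLogit_le (hy : ∀ w, enorm (yp w) ≤ r) (i u : Fin n) :
    |attLogit K Q yp i u| ≤ r ^ 2 * specNorm (Kᵀ * Q) := by
  rw [attLogit_eq_dotProduct_mulVec]
  refine (abs_dotProduct_mulVec_le _ _ _).trans ?_
  rw [mul_comm _ (specNorm _), sq]
  exact mul_le_mul_of_nonneg_left
    (mul_le_mul (hy u) (hy i) (enorm_nonneg _) ((enorm_nonneg _).trans (hy u)))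
    (specNorm_nonneg _)

lemma abs_attLogit_sub_le (hy : ∀ w, enorm (yp w) ≤ r) (hy' : ∀ w, enorm (yp' w) ≤ r)
    (i u : Fin n) :
    |attLogit K Q yp i u - attLogit K Q yp' i u| ≤
      r * specNorm (Kᵀ * Q) * (enorm (yp i - yp' i) + enorm (yp u - yp' u)) := by
  simp only [attLogit_eq_dotProduct_mulVec]
  refine (abs_dotProduct_mulVec_sub_le _ _ _ _ _).trans ?_
  have hr : 0 ≤ r := (enorm_nonneg _).trans (hy i)
  calc specNorm (Kᵀ * Q) * (enorm (yp u) * enorm (yp i - yp' i) +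
        enorm (yp u - yp' u) * enorm (yp' i))
      ≤ specNorm (Kᵀ * Q) * (r * enorm (yp i - yp' i) + enorm (yp u - yp' u) * r) := by
        have := specNorm_nonneg (Kᵀ * Q)
        have := enorm_nonneg (yp i - yp' i)
        have := enorm_nonneg (yp u - yp' u)
        gcongr
        exacts [hy u, hy' i]
    _ = r * specNorm (Kᵀ * Q) * (enorm (yp i - yp' i) + enorm (yp u - yp' u)) := by ring

def attHead (V : Matrix (Fin d) (Fin d) ℝ) (yp : Fin n → Fin d → ℝ) (i : Fin n) : Fin d → ℝ :=
  ∑ u, attWeight K Q yp i u • V *ᵥ yp u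

theorem enorm_attHead_sub_le (V : Matrix (Fin d) (Fin d) ℝ) (hy : ∀ w, enorm (yp w) ≤ r)
    (hy' : ∀ w, enorm (yp' w) ≤ r) (j : Fin n) :
    enorm (attHead K Q V yp j - attHead K Q V yp' j) ≤
      specNorm V * Real.exp (4 * (r ^ 2 * specNorm (Kᵀ * Q))) *
        (enorm (yp j - yp' j) + (1 / n) * ∑ w, enorm (yp w - yp' w)) := by
  set A := r ^ 2 * specNorm (Kᵀ * Q)
  set T := ∑ w, enorm (yp w - yp' w)
  set X := enorm (yp j - yp' j) + (1 / n) * T with hX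
  have hn : (0 : ℝ) < n := Nat.cast_pos.2 j.pos
  have hr : 0 ≤ r := (enorm_nonneg _).trans (hy j)
  have hT : 0 ≤ T := Finset.sum_nonneg fun w _ ↦ enorm_nonneg _
  have hX0 : 0 ≤ X := add_nonneg (enorm_nonneg _) (mul_nonneg (by positivity) hT)
  have hlogit := abs_attLogit_le K Q hy j
  have hlogit' := abs_attLogit_le K Q hy' j
  have hlogit_sum : ∑ u, |attLogit K Q yp j u - attLogit K Q yp' j u| ≤
      r * specNorm (Kᵀ * Q) * (n * X) := by
    refine (Finset.sum_le_sum fun u _ ↦ abs_attLogit_sub_le K Q hy hy' j u).trans_eq ?_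
    rw [← Finset.mul_sum, Finset.sum_add_distrib, Finset.sum_const, Finset.card_univ,
      Fintype.card_fin, nsmul_eq_mul, hX]
    field_simp
    rfl
  have hweight : ∑ u, |attWeight K Q yp j u - attWeight K Q yp' j u| ≤
      2 * Real.exp (2 * A) * (r * specNorm (Kᵀ * Q) * X) := by
    simp only [attWeight_eq_softmax]
    refine (sum_abs_softmax_sub_le hlogit hlogit').trans ?_
    rw [Fintype.card_fin]
    refine (mul_le_mul_of_nonneg_left hlogit_sum (by positivity)).trans_eq ?_
    rw [mul_left_comm _ (n : ℝ), ← mul_assoc, div_mul_cancel₀ _ hn.ne']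
  have hhead := enorm_sum_smul_mulVec_sub_le V (p := attWeight K Q yp j)
    (p' := attWeight K Q yp' j) (z := yp)
    (fun u ↦ div_nonneg (Real.exp_pos _).le (Finset.sum_nonneg fun _ _ ↦ (Real.exp_pos _).le))
    (fun u ↦ (softmax_le hlogit u).trans_eq (by rw [Fintype.card_fin])) hy'
  calc enorm (attHead K Q V yp j - attHead K Q V yp' j)
      ≤ specNorm V * (Real.exp (2 * A) / n * T + r * (2 * Real.exp (2 * A) *
          (r * specNorm (Kᵀ * Q) * X))) :=
        hhead.trans (by gcongr; exact specNorm_nonneg V)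
    _ = specNorm V * Real.exp (2 * A) * ((1 / n) * T + 2 * A * X) := by ring
    _ ≤ specNorm V * Real.exp (2 * A) * ((2 * A + 1) * X) := by
        have := specNorm_nonneg V
        gcongr
        linarith [enorm_nonneg (yp j - yp' j)]
    _ ≤ specNorm V * Real.exp (2 * A) * (Real.exp (2 * A) * X) := by
        have := specNorm_nonneg V
        gcongr
        exact Real.add_one_le_exp _
    _ = specNorm V * Real.exp (4 * A) * X := by
        rw [show 4 * A = 2 * A + 2 * A by ring, Real.exp_add]; ring

end Attention

end SensTF

/-- Lemma: pointwise Lipschitz bound on an attention head at higher layers.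
If `‖V‖₂ ≤ C_V`, `‖y_i(x)‖₂ ≤ √d` for all `i, x`, and `C_A = d·‖KᵀQ‖₂`, then with
`Head_j(x) = ∑_u â_{j,u}(x) V y_u(x)`:
`‖Head_j(x) − Head_j(x^{⊕q})‖₂ ≤ 4·C_V·√d·exp(4C_A)·(‖y_j(x) − y_j(x^{⊕q})‖₂
  + (1/n)·∑_w ‖y_w(x) − y_w(x^{⊕q})‖₂)`. -/
theorem statement12 {d n : ℕ} (K Q V : Matrix (Fin d) (Fin d) ℝ)
    (CV : ℝ) (hV : specNorm V ≤ CV)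
    (y : Fin n → (Fin n → Bool) → Fin d → ℝ)
    (hy : ∀ (i : Fin n) (x : Fin n → Bool), SensTF.enorm (y i x) ≤ Real.sqrt d)
    (x : Fin n → Bool) (j q : Fin n) :
    SensTF.enorm ((fun jj => ∑ u : Fin n,
              attWeight K Q (fun w => y w x) j u * (V.mulVec (y u x)) jj) -
           (fun jj => ∑ u : Fin n,
              attWeight K Q (fun w => y w (flip x q)) j u *
                (V.mulVec (y u (flip x q))) jj)) ≤
      4 * CV * Real.sqrt d * Real.exp (4 * (d * specNorm (Kᵀ * Q))) *
        (SensTF.enorm (y j x - y j (flip x q)) +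
          (1 / n) * ∑ w : Fin n, SensTF.enorm (y w x - y w (flip x q))) := by
  have head_eq : ∀ z, (fun jj => ∑ u : Fin n, attWeight K Q (fun w => y w z) j u *
      (V.mulVec (y u z)) jj) = attHead K Q V (fun w => y w z) j := by
    intro z; ext; simp [attHead, Finset.sum_apply]
  rw [head_eq, head_eq]
  rcases Nat.eq_zero_or_pos d with rfl | hd
  · simp [SensTF.enorm]
  have hbound := enorm_attHead_sub_le K Q V (hy · x) (hy · (flip x q)) j
  rw [Real.sq_sqrt (Nat.cast_nonneg d)] at hbound
  have hVd : specNorm V ≤ 4 * CV * Real.sqrt d := by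
    have hsqrt : 1 ≤ Real.sqrt d := Real.one_le_sqrt.2 (by exact_mod_cast hd)
    nlinarith [specNorm_nonneg V]
  have hsum := Finset.sum_nonneg fun w (_ : w ∈ Finset.univ) ↦
    enorm_nonneg (y w x - y w (flip x q))
  have := enorm_nonneg (y j x - y j (flip x q))
  exact hbound.trans (by gcongr)
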